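/- arXiv:2204.10840 — 3 statements merged into one kernel-verified Lean document; each statement's English description precedes it below -/
import Mathlib

section
/- Let L_n = 3 + Binomial(n-1, p) with 0 < p < 1 and let α be a positive integer. Then the α-th moment satisfies E[L_n^α] = p^α n^α + (α/2)(α(1-p) - p + 5) p^{α-1} n^{α-1} + O(n^{α-2}) as n → ∞. -/
open Filter MeasureTheory Asymptotics Topology

/-- Expectation of `f` under a Binomial(m, p) distribution, as a finite sum. -/
noncomputable def binExp (m : ℕ) (p : ℝ) (f : ℕ → ℝ) : ℝ :=
  ∑ k ∈ Finset.range (m+1), (m.choose k : ℝ) * p^k * (1-p)^(m-k) * f k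

/-- Variance of `f` under a Binomial(m, p) distribution. -/
noncomputable def binVar (m : ℕ) (p : ℝ) (f : ℕ → ℝ) : ℝ :=
  binExp m p (fun k => (f k - binExp m p f)^2)

open Polynomial Finset in
noncomputable def linProd (c : ℕ → ℝ) (j : ℕ) : Polynomial ℝ :=
  ∏ i ∈ Finset.range j, (Polynomial.X - Polynomial.C (c i))

section AuxLemmas
open Polynomial Finset

lemma binExp_succ (m : ℕ) (p : ℝ) (f : ℕ → ℝ) :
    binExp (m+1) p f = p * binExp m p (fun k => f (k+1)) + (1-p) * binExp m p f := by
  unfold binExp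
  rw [Finset.sum_range_succ' (n := m+1)]
  have split : ∑ i ∈ Finset.range (m+1), ((m+1).choose (i+1) : ℝ) * p^(i+1) * (1-p)^(m+1-(i+1)) * f (i+1)
      = (∑ i ∈ Finset.range (m+1), (m.choose i : ℝ) * p^(i+1) * (1-p)^(m-i) * f (i+1))
      + (∑ i ∈ Finset.range (m+1), (m.choose (i+1) : ℝ) * p^(i+1) * (1-p)^(m-i) * f (i+1)) := by
    rw [← Finset.sum_add_distrib]
    refine Finset.sum_congr rfl fun i hi => ?_
    rw [Nat.choose_succ_succ, Nat.succ_sub_succ]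
    push_cast; ring
  rw [split]
  have h1 : ∑ i ∈ Finset.range (m+1), (m.choose i : ℝ) * p^(i+1) * (1-p)^(m-i) * f (i+1)
      = p * ∑ k ∈ Finset.range (m+1), (m.choose k : ℝ) * p^k * (1-p)^(m-k) * f (k+1) := by
    rw [Finset.mul_sum]; exact Finset.sum_congr rfl fun i _ => by ring
  have h2 : (∑ i ∈ Finset.range (m+1), (m.choose (i+1) : ℝ) * p^(i+1) * (1-p)^(m-i) * f (i+1))
      + ((m+1).choose 0 : ℝ) * p^0 * (1-p)^(m+1-0) * f 0
      = (1-p) * ∑ k ∈ Finset.range (m+1), (m.choose k : ℝ) * p^k * (1-p)^(m-k) * f k := by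
    have hc : ∀ i ∈ Finset.range m, (m.choose (i+1) : ℝ) * p^(i+1) * (1-p)^(m-i) * f (i+1)
        = (1-p) * ((m.choose (i+1) : ℝ) * p^(i+1) * (1-p)^(m-(i+1)) * f (i+1)) := by
      intro i hi
      rw [Finset.mem_range] at hi
      rw [show m - i = (m - (i+1)) + 1 by omega, pow_succ]
      ring
    conv_lhs => rw [Finset.sum_range_succ, Finset.sum_congr rfl hc]
    conv_rhs => rw [Finset.sum_range_succ', mul_add, Finset.mul_sum]
    simp [Nat.choose_succ_self, pow_succ]
    ring
  rw [h1, ← h2]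
  ring

lemma binExp_sum (m : ℕ) (p : ℝ) {ι : Type*} (s : Finset ι) (g : ι → ℕ → ℝ) :
    binExp m p (fun k => ∑ j ∈ s, g j k) = ∑ j ∈ s, binExp m p (g j) := by
  unfold binExp
  rw [Finset.sum_comm]
  exact Finset.sum_congr rfl fun k _ => by rw [Finset.mul_sum]

lemma binExp_const_mul (m : ℕ) (p c : ℝ) (f : ℕ → ℝ) :
    binExp m p (fun k => c * f k) = c * binExp m p f := by
  unfold binExp
  rw [Finset.mul_sum]
  exact Finset.sum_congr rfl fun k _ => by ring

lemma binExp_add (m : ℕ) (p : ℝ) (f g : ℕ → ℝ) :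
    binExp m p (fun k => f k + g k) = binExp m p f + binExp m p g := by
  unfold binExp
  rw [← Finset.sum_add_distrib]
  exact Finset.sum_congr rfl fun k _ => by ring

lemma descFactorial_succ_left (k j : ℕ) :
    (k+1).descFactorial (j+1) = k.descFactorial (j+1) + (j+1) * k.descFactorial j := by
  rcases Nat.lt_or_ge k j with h | h
  · rw [Nat.descFactorial_of_lt (by omega), Nat.descFactorial_of_lt (by omega),
      Nat.descFactorial_of_lt (by omega)]
    simp
  · rw [Nat.succ_descFactorial_succ, Nat.descFactorial_succ]
    have : k + 1 = (k - j) + (j + 1) := by omega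
    rw [this, add_mul]

lemma binExp_descFactorial (p : ℝ) : ∀ (m j : ℕ),
    binExp m p (fun k => (k.descFactorial j : ℝ)) = (m.descFactorial j : ℝ) * p^j := by
  intro m
  induction m with
  | zero =>
    intro j
    have h0 : binExp 0 p (fun k => (k.descFactorial j : ℝ)) = ((0 : ℕ).descFactorial j : ℝ) := by
      simp [binExp]
    rw [h0]
    cases j with
    | zero => simp
    | succ j => simp [Nat.zero_descFactorial_succ]
  | succ m ih =>
    intro j
    rw [binExp_succ]
    cases j with
    | zero =>
      have := ih 0
      simp only [Nat.descFactorial_zero, Nat.cast_one, pow_zero, mul_one] at this ⊢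
      rw [this]; ring
    | succ j =>
      have hshift : binExp m p (fun k => ((k+1).descFactorial (j+1) : ℝ))
          = binExp m p (fun k => (k.descFactorial (j+1) : ℝ) + ((j:ℝ)+1) * (k.descFactorial j : ℝ)) := by
        congr 1
        funext k
        rw [descFactorial_succ_left]
        push_cast
        ring
      rw [hshift, binExp_add, binExp_const_mul, ih, ih]
      have : ((m+1).descFactorial (j+1) : ℝ) = (m.descFactorial (j+1) : ℝ) + ((j:ℝ)+1) * (m.descFactorial j : ℝ) := by
        rw [descFactorial_succ_left]; push_cast; ring
      rw [this]
      ring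

lemma linProd_succ (c : ℕ → ℝ) (j : ℕ) :
    linProd c (j+1) = linProd c j * (Polynomial.X - Polynomial.C (c j)) :=
  Finset.prod_range_succ _ _

lemma monic_linProd (c : ℕ → ℝ) (j : ℕ) : (linProd c j).Monic :=
  monic_prod_of_monic _ _ fun i _ => monic_X_sub_C (c i)

lemma natDegree_linProd (c : ℕ → ℝ) (j : ℕ) : (linProd c j).natDegree = j := by
  rw [linProd, Polynomial.natDegree_prod_of_monic _ _ fun i _ => monic_X_sub_C (c i)]
  simp

lemma coeff_linProd_self (c : ℕ → ℝ) (j : ℕ) : (linProd c j).coeff j = 1 := by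
  have := (monic_linProd c j).coeff_natDegree
  rwa [natDegree_linProd] at this

lemma coeff_linProd_of_lt (c : ℕ → ℝ) {j k : ℕ} (h : j < k) : (linProd c j).coeff k = 0 :=
  Polynomial.coeff_eq_zero_of_natDegree_lt (by rw [natDegree_linProd]; exact h)

lemma coeff_linProd_pred (c : ℕ → ℝ) : ∀ j : ℕ,
    (linProd c (j+1)).coeff j = -(∑ i ∈ Finset.range (j+1), c i) := by
  intro j
  induction j with
  | zero => simp [linProd]
  | succ j ih =>
    rw [linProd_succ, mul_sub, Polynomial.coeff_sub, Polynomial.coeff_mul_X,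
      Polynomial.coeff_mul_C, ih, coeff_linProd_self,
      show (∑ i ∈ Finset.range (j+1+1), c i) = (∑ i ∈ Finset.range (j+1), c i) + c (j+1)
        from Finset.sum_range_succ c (j+1)]
    ring

lemma eval_linProd (c : ℕ → ℝ) (j : ℕ) (x : ℝ) :
    (linProd c j).eval x = ∏ i ∈ Finset.range j, (x - c i) := by
  simp [linProd, Polynomial.eval_prod]

lemma cast_descFactorial (k : ℕ) : ∀ j : ℕ,
    ((k.descFactorial j : ℕ) : ℝ) = ∏ i ∈ Finset.range j, ((k:ℝ) - (i:ℝ)) := by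
  intro j
  induction j with
  | zero => simp
  | succ j ih =>
    rcases Nat.lt_or_ge k j with h | h
    · rw [Nat.descFactorial_of_lt (by omega), Finset.prod_range_succ, ← ih,
        Nat.descFactorial_of_lt h]
      simp
    · rw [Nat.descFactorial_succ, Finset.prod_range_succ, ← ih]
      push_cast [h]
      ring

lemma expand_pow : ∀ α : ℕ, ∃ a : ℕ → ℝ, (∀ j, α < j → a j = 0) ∧
    (Polynomial.X + Polynomial.C (3:ℝ))^α
      = ∑ j ∈ Finset.range (α+1), Polynomial.C (a j) * linProd (fun i => (i:ℝ)) j := by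
  intro α
  induction α with
  | zero =>
    refine ⟨fun j => if j = 0 then 1 else 0, fun j hj => if_neg (by omega), ?_⟩
    simp [linProd]
  | succ α ih =>
    obtain ⟨a, ha0, ha⟩ := ih
    refine ⟨fun j => (if j = 0 then 0 else a (j-1)) + ((j:ℝ) + 3) * a j, fun j hj => ?_, ?_⟩
    · have h1 : a (j-1) = 0 := ha0 _ (by omega)
      have h2 : a j = 0 := ha0 _ (by omega)
      rcases Nat.eq_zero_or_pos j with h | h
      · omega
      · simp only []
        rw [if_neg (by omega : ¬ j = 0), h1, h2]; ring
    · rw [pow_succ, ha, Finset.sum_mul]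
      have key : ∀ j ∈ Finset.range (α+1),
          Polynomial.C (a j) * linProd (fun i => (i:ℝ)) j * (Polynomial.X + Polynomial.C (3:ℝ))
          = Polynomial.C (a j) * linProd (fun i => (i:ℝ)) (j+1)
            + Polynomial.C (((j:ℝ)+3) * a j) * linProd (fun i => (i:ℝ)) j := by
        intro j _
        rw [linProd_succ]
        have : (Polynomial.X + Polynomial.C (3:ℝ))
            = (Polynomial.X - Polynomial.C ((j:ℝ))) + Polynomial.C ((j:ℝ)+3) := by
          rw [Polynomial.C_add]; ring
        rw [this]
        rw [Polynomial.C_mul]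
        ring
      rw [Finset.sum_congr rfl key, Finset.sum_add_distrib]
      -- LHS now: Σ_{j∈range(α+1)} C(a j) E(j+1) + Σ_{j∈range(α+1)} C((j+3)a j) E j
      -- RHS: Σ_{j∈range(α+2)} C(b j) E j
      conv_rhs => rw [Finset.sum_range_succ' (n := α+1)]
      have hb0 : Polynomial.C ((if (0:ℕ) = 0 then (0:ℝ) else a (0-1)) + (((0:ℕ):ℝ) + 3) * a 0)
          * linProd (fun i => (i:ℝ)) 0 = Polynomial.C (3 * a 0) * linProd (fun i => (i:ℝ)) 0 := by
        norm_num
      have hsplit : ∀ i ∈ Finset.range (α+1),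
          Polynomial.C ((if (i+1 : ℕ) = 0 then (0:ℝ) else a (i+1-1)) + (((i+1:ℕ):ℝ) + 3) * a (i+1))
            * linProd (fun i => (i:ℝ)) (i+1)
          = Polynomial.C (a i) * linProd (fun i => (i:ℝ)) (i+1)
            + Polynomial.C ((((i+1:ℕ):ℝ)+3) * a (i+1)) * linProd (fun i => (i:ℝ)) (i+1) := by
        intro i _
        simp only [Nat.add_sub_cancel, if_neg (Nat.succ_ne_zero i)]
        rw [Polynomial.C_add]
        ring
      rw [Finset.sum_congr rfl hsplit, Finset.sum_add_distrib, hb0]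
      have hext : ∑ j ∈ Finset.range (α+1), Polynomial.C ((((j:ℕ):ℝ)+3) * a j) * linProd (fun i => (i:ℝ)) j
          = ∑ j ∈ Finset.range (α+2), Polynomial.C ((((j:ℕ):ℝ)+3) * a j) * linProd (fun i => (i:ℝ)) j := by
        conv_rhs => rw [Finset.sum_range_succ]
        rw [ha0 (α+1) (by omega)]
        simp
      have hshift : ∑ j ∈ Finset.range (α+2), Polynomial.C ((((j:ℕ):ℝ)+3) * a j) * linProd (fun i => (i:ℝ)) j
          = (∑ i ∈ Finset.range (α+1), Polynomial.C ((((i+1:ℕ):ℝ)+3) * a (i+1)) * linProd (fun i => (i:ℝ)) (i+1))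
            + Polynomial.C ((((0:ℕ):ℝ)+3) * a 0) * linProd (fun i => (i:ℝ)) 0 :=
        Finset.sum_range_succ' _ (α+1)
      rw [hext, hshift]
      norm_num
      ring

end AuxLemmas

section Main
open Polynomial Finset

/-- Asymptotics of the α-th moment of L_n = 3 + Binomial(n-1,p):
E[L_n^α] = p^α n^α + (α/2)(α(1-p)-p+5) p^{α-1} n^{α-1} + O(n^{α-2}). -/
theorem stmt7 (p : ℝ) (hp0 : 0 < p) (hp1 : p < 1) (α : ℕ) (hα : 1 ≤ α) :
    (fun n : ℕ => binExp (n-1) p (fun k => ((k : ℝ) + 3) ^ α)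
        - p ^ α * (n : ℝ) ^ α
        - ((α : ℝ) / 2) * ((α : ℝ) * (1 - p) - p + 5) * p ^ (α - 1) * (n : ℝ) ^ (α - 1))
      =O[Filter.atTop] (fun n : ℕ => (n : ℝ) ^ ((α : ℤ) - 2)) := by
  obtain ⟨β, rfl⟩ : ∃ β, α = β + 1 := ⟨α - 1, by omega⟩
  obtain ⟨a, ha0, ha⟩ := expand_pow (β+1)
  set E : ℕ → Polynomial ℝ := linProd (fun i => (i:ℝ)) with hE
  set D : ℕ → Polynomial ℝ := linProd (fun i => (i:ℝ)+1) with hD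
  -- Gauss sum
  set S : ℝ := ∑ i ∈ Finset.range (β+1), (i:ℝ) with hSdef
  have hS : S * 2 = ((β:ℝ)+1) * β := by
    rw [hSdef]
    have := Finset.sum_range_id_mul_two (β+1)
    have : ((∑ i ∈ Finset.range (β+1), i) * 2 : ℕ) = ((β+1) * β : ℕ) := by
      rw [this]; simp
    have h3 := congrArg (fun n : ℕ => (n:ℝ)) this
    push_cast at h3
    convert h3 using 2
  -- extract a (β+1) = 1
  have haTop : a (β+1) = 1 := by
    have h1 := congrArg (fun q => Polynomial.coeff q (β+1)) ha
    simp only [Polynomial.coeff_X_add_C_pow, Polynomial.finset_sum_coeff,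
      Polynomial.coeff_C_mul] at h1
    rw [Finset.sum_eq_single (β+1)] at h1
    · rw [coeff_linProd_self] at h1
      simpa using h1.symm
    · intro j hj hne
      rw [Finset.mem_range] at hj
      rw [coeff_linProd_of_lt _ (by omega)]
      ring
    · intro h; exact absurd (Finset.self_mem_range_succ (β+1)) h
  -- extract a β
  have haSub : a β = 3 * ((β:ℝ)+1) + S := by
    have h1 := congrArg (fun q => Polynomial.coeff q β) ha
    simp only [Polynomial.coeff_X_add_C_pow, Polynomial.finset_sum_coeff,
      Polynomial.coeff_C_mul] at h1
    rw [Finset.sum_range_succ, Finset.sum_eq_single β] at h1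
    · rw [coeff_linProd_self, coeff_linProd_pred, haTop] at h1
      have h2 : (3:ℝ) ^ (β + 1 - β) * ((β+1).choose β : ℝ) = 3 * ((β:ℝ)+1) := by
        rw [show β + 1 - β = 1 by omega, Nat.choose_succ_self_right]
        push_cast; ring
      rw [h2] at h1
      rw [← hSdef] at h1
      linarith
    · intro j hj hne
      rw [Finset.mem_range] at hj
      rw [coeff_linProd_of_lt _ (by omega)]
      ring
    · intro h; exact absurd (Finset.mem_range.mpr (by omega)) h
  -- the polynomial Q with Q.eval n = binExp (n-1) p ((·+3)^α) for n ≥ 1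
  set Q : Polynomial ℝ := ∑ j ∈ Finset.range (β+2), Polynomial.C (a j * p^j) * D j with hQ
  set cstar : ℝ := (((β:ℝ)+1) / 2) * (((β:ℝ)+1) * (1 - p) - p + 5) * p ^ β with hcstar
  have hQtop : Q.coeff (β+1) = p^(β+1) := by
    rw [hQ, Polynomial.finset_sum_coeff]
    rw [Finset.sum_eq_single (β+1)]
    · rw [Polynomial.coeff_C_mul, coeff_linProd_self, haTop]; ring
    · intro j hj hne
      rw [Finset.mem_range] at hj
      rw [Polynomial.coeff_C_mul, coeff_linProd_of_lt _ (by omega)]; ring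
    · intro h; exact absurd (Finset.self_mem_range_succ (β+1)) h
  have hQsub : Q.coeff β = cstar := by
    rw [hQ, Polynomial.finset_sum_coeff, Finset.sum_range_succ, Finset.sum_eq_single β]
    · rw [Polynomial.coeff_C_mul, coeff_linProd_self, Polynomial.coeff_C_mul,
        coeff_linProd_pred, haTop, haSub]
      have hsum : ∑ i ∈ Finset.range (β+1), ((i:ℝ)+1) = S + ((β:ℝ)+1) := by
        rw [Finset.sum_add_distrib, ← hSdef]
        simp
      rw [hsum, hcstar]
      have hSval : S = ((β:ℝ)+1) * β / 2 := by linarith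
      rw [hSval]
      push_cast
      ring
    · intro j hj hne
      rw [Finset.mem_range] at hj
      rw [Polynomial.coeff_C_mul, coeff_linProd_of_lt _ (by omega)]; ring
    · intro h; exact absurd (Finset.mem_range.mpr (by omega)) h
  have hQhigh : ∀ j, β + 1 < j → Q.coeff j = 0 := by
    intro j hj
    rw [hQ, Polynomial.finset_sum_coeff]
    refine Finset.sum_eq_zero fun i hi => ?_
    rw [Finset.mem_range] at hi
    rw [Polynomial.coeff_C_mul, coeff_linProd_of_lt _ (by omega)]; ring
  -- evaluation identity
  have heval : ∀ n : ℕ, 1 ≤ n →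
      binExp (n-1) p (fun k => ((k:ℝ) + 3)^(β+1)) = Q.eval (n:ℝ) := by
    intro n hn
    have hpt : (fun k : ℕ => ((k:ℝ) + 3)^(β+1))
        = fun k : ℕ => ∑ j ∈ Finset.range (β+2), a j * ((k.descFactorial j : ℕ) : ℝ) := by
      funext k
      have h1 : ((k:ℝ) + 3)^(β+1)
          = Polynomial.eval (k:ℝ) ((Polynomial.X + Polynomial.C (3:ℝ))^(β+1)) := by simp
      rw [h1, ha, Polynomial.eval_finset_sum]
      refine Finset.sum_congr rfl fun j _ => ?_
      rw [Polynomial.eval_mul, Polynomial.eval_C, eval_linProd, cast_descFactorial]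
    rw [hpt, binExp_sum]
    have h2 : ∀ j ∈ Finset.range (β+2),
        binExp (n-1) p (fun k => a j * ((k.descFactorial j : ℕ):ℝ))
        = a j * (((n-1).descFactorial j : ℕ):ℝ) * p^j := by
      intro j _
      rw [binExp_const_mul, binExp_descFactorial]
      ring
    rw [Finset.sum_congr rfl h2, hQ, Polynomial.eval_finset_sum]
    refine Finset.sum_congr rfl fun j _ => ?_
    rw [Polynomial.eval_mul, Polynomial.eval_C, hD, eval_linProd, cast_descFactorial]
    have hcast : ((n-1 : ℕ):ℝ) = (n:ℝ) - 1 := by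
      have : (1:ℕ) ≤ n := hn
      push_cast [this]
      ring
    rw [hcast]
    have : ∏ i ∈ Finset.range j, ((n:ℝ) - 1 - (i:ℝ)) = ∏ i ∈ Finset.range j, ((n:ℝ) - ((i:ℝ)+1)) :=
      Finset.prod_congr rfl fun i _ => by ring
    rw [this]
    ring
  -- remainder polynomial
  set R : Polynomial ℝ := Q - Polynomial.C (p^(β+1)) * Polynomial.X^(β+1)
      - Polynomial.C cstar * Polynomial.X^β with hR
  have hRcoeff : ∀ j, β ≤ j → R.coeff j = 0 := by
    intro j hj
    rw [hR, Polynomial.coeff_sub, Polynomial.coeff_sub, Polynomial.coeff_C_mul,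
      Polynomial.coeff_C_mul, Polynomial.coeff_X_pow, Polynomial.coeff_X_pow]
    rcases eq_or_lt_of_le hj with h | h
    · subst h
      rw [hQsub, if_neg (by omega), if_pos rfl]
      ring
    · rcases Nat.eq_or_lt_of_le h with h2 | h2
      · rw [← h2, hQtop, if_pos rfl, if_neg (by omega)]
        ring
      · rw [hQhigh j (by omega), if_neg (by omega), if_neg (by omega)]
        ring
  -- the target function agrees with eval of R eventually
  have hfun : (fun n : ℕ => binExp (n-1) p (fun k => ((k : ℝ) + 3) ^ (β+1))
        - p ^ (β+1) * (n : ℝ) ^ (β+1)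
        - (((β+1 : ℕ) : ℝ) / 2) * (((β+1 : ℕ) : ℝ) * (1 - p) - p + 5) * p ^ (β+1-1) * (n : ℝ) ^ (β+1-1))
      =ᶠ[Filter.atTop] (fun n : ℕ => R.eval (n:ℝ)) := by
    filter_upwards [Filter.eventually_ge_atTop 1] with n hn
    rw [heval n hn, hR]
    simp only [Polynomial.eval_sub, Polynomial.eval_mul, Polynomial.eval_C,
      Polynomial.eval_pow, Polynomial.eval_X, Nat.add_sub_cancel, hcstar]
    push_cast
    ring
  refine hfun.trans_isBigO ?_
  rcases Nat.eq_zero_or_pos β with hβ | hβ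
  · -- α = 1 : remainder is identically zero
    subst hβ
    have hR0 : R = 0 := by
      ext j
      simpa using hRcoeff j (Nat.zero_le j)
    rw [hR0]
    simpa using Asymptotics.isBigO_zero (fun n : ℕ => (n : ℝ) ^ (((0+1 : ℕ) : ℤ) - 2)) Filter.atTop
  · -- α ≥ 2
    have hdeg : R.natDegree ≤ β - 1 := by
      rw [Polynomial.natDegree_le_iff_coeff_eq_zero]
      intro j hjj
      exact hRcoeff j (by omega)
    have hdeg2 : R.degree ≤ (Polynomial.X ^ (β-1) : Polynomial ℝ).degree := by
      rw [Polynomial.degree_X_pow]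
      exact Polynomial.degree_le_natDegree.trans (by exact_mod_cast hdeg)
    have hbig := Polynomial.isBigO_of_degree_le (P := R) (Q := Polynomial.X ^ (β-1)) hdeg2
    have hbig2 := hbig.comp_tendsto tendsto_natCast_atTop_atTop
    have hsimp : ((fun x : ℝ => Polynomial.eval x (Polynomial.X ^ (β-1) : Polynomial ℝ)) ∘ (Nat.cast : ℕ → ℝ))
        = fun n : ℕ => (n:ℝ) ^ (((β+1 : ℕ) : ℤ) - 2) := by
      funext n
      simp only [Function.comp_apply, Polynomial.eval_pow, Polynomial.eval_X]
      rw [show (((β+1 : ℕ) : ℤ) - 2) = ((β - 1 : ℕ) : ℤ) by push_cast [hβ]; omega, zpow_natCast]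
    rw [hsimp] at hbig2
    exact hbig2

end Main
end

section
/- Let F_n = L_n^3 - 7 L_n + 8(n+2) with L_n = 3 + Binomial(n-1,p), 0 < p < 1. Then E[F_n] = p^3 n^3 + (12p^2 - 6p^3) n^2 + (11p^3 - 36p^2 + 30p + 8) n - 6p^3 + 24p^2 - 30p + 22. -/
open Filter MeasureTheory Asymptotics Topology

lemma bE_one (m : ℕ) (p : ℝ) : binExp m p (fun _ => 1) = 1 := by
  have h := add_pow p (1-p) m
  simp only [add_sub_cancel, one_pow] at h
  unfold binExp
  calc ∑ k ∈ Finset.range (m+1), (m.choose k : ℝ) * p^k * (1-p)^(m-k) * (fun _ => (1:ℝ)) k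
      = ∑ k ∈ Finset.range (m+1), p^k * (1-p)^(m-k) * (m.choose k : ℝ) :=
        Finset.sum_congr rfl fun k _ => by ring
    _ = 1 := h.symm

lemma bE_mul (m : ℕ) (p : ℝ) (f : ℕ → ℝ) :
    binExp (m+1) p (fun k => (k:ℝ) * f k) = ((m:ℝ)+1) * p * binExp m p (fun k => f (k+1)) := by
  unfold binExp
  rw [Finset.sum_range_succ']
  simp only [Nat.cast_zero, zero_mul, mul_zero, add_zero]
  rw [Finset.mul_sum]
  apply Finset.sum_congr rfl
  intro i hi
  have hc : ((m:ℝ)+1) * (m.choose i : ℝ) = ((m+1).choose (i+1) : ℝ) * ((i:ℝ)+1) := by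
    exact_mod_cast congrArg (Nat.cast (R := ℝ)) (Nat.add_one_mul_choose_eq m i)
  have h2 : m + 1 - (i+1) = m - i := by omega
  rw [h2]
  push_cast
  linear_combination (-(p^(i+1) * (1-p)^(m-i) * f (i+1))) * hc

lemma bE_poly (m : ℕ) (p a b c d : ℝ) :
    binExp m p (fun k => a*(k:ℝ)^3 + b*(k:ℝ)^2 + c*(k:ℝ) + d) =
      a * binExp m p (fun k => (k:ℝ)^3) + b * binExp m p (fun k => (k:ℝ)^2)
        + c * binExp m p (fun k => (k:ℝ)) + d := by
  have key : binExp m p (fun k => a*(k:ℝ)^3 + b*(k:ℝ)^2 + c*(k:ℝ) + d) =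
      a * binExp m p (fun k => (k:ℝ)^3) + b * binExp m p (fun k => (k:ℝ)^2)
        + c * binExp m p (fun k => (k:ℝ)) + d * binExp m p (fun _ => 1) := by
    unfold binExp
    rw [Finset.mul_sum, Finset.mul_sum, Finset.mul_sum, Finset.mul_sum,
      ← Finset.sum_add_distrib, ← Finset.sum_add_distrib, ← Finset.sum_add_distrib]
    exact Finset.sum_congr rfl fun k _ => by ring
  rw [key, bE_one, mul_one]

lemma bE_m1 (m : ℕ) (p : ℝ) : binExp m p (fun k => (k:ℝ)) = (m:ℝ) * p := by
  cases m with
  | zero => simp [binExp]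
  | succ j =>
    have h := bE_mul j p (fun _ => 1)
    simp only [mul_one] at h
    rw [h, bE_one]
    push_cast; ring

lemma bE_m2 (m : ℕ) (p : ℝ) :
    binExp m p (fun k => (k:ℝ)^2) = (m:ℝ)*p + (m:ℝ)*((m:ℝ)-1)*p^2 := by
  cases m with
  | zero => simp [binExp]
  | succ j =>
    have h := bE_mul j p (fun k => (k:ℝ))
    have e1 : (fun (k:ℕ) => (k:ℝ) * (k:ℝ)) = (fun (k:ℕ) => (k:ℝ)^2) := by funext k; ring
    have e2 : (fun k => ((k+1:ℕ):ℝ)) = (fun (k:ℕ) => 0*(k:ℝ)^3 + 0*(k:ℝ)^2 + 1*(k:ℝ) + 1) := by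
      funext k; push_cast; ring
    rw [e1, e2, bE_poly, bE_m1] at h
    rw [h]
    push_cast; ring

lemma bE_m3 (m : ℕ) (p : ℝ) :
    binExp m p (fun k => (k:ℝ)^3)
      = (m:ℝ)*p + 3*(m:ℝ)*((m:ℝ)-1)*p^2 + (m:ℝ)*((m:ℝ)-1)*((m:ℝ)-2)*p^3 := by
  cases m with
  | zero => simp [binExp]
  | succ j =>
    have h := bE_mul j p (fun k => (k:ℝ)^2)
    have e1 : (fun (k:ℕ) => (k:ℝ) * (k:ℝ)^2) = (fun (k:ℕ) => (k:ℝ)^3) := by funext k; ring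
    have e2 : (fun k => ((k+1:ℕ):ℝ)^2) = (fun (k:ℕ) => 0*(k:ℝ)^3 + 1*(k:ℝ)^2 + 2*(k:ℝ) + 1) := by
      funext k; push_cast; ring
    rw [e1, e2, bE_poly, bE_m2, bE_m1] at h
    rw [h]
    push_cast; ring


/-- E[F_n] for the forgotten index F_n = L_n^3 - 7L_n + 8(n+2). -/
theorem stmt15 (n : ℕ) (hn : 1 ≤ n) (p : ℝ) (hp0 : 0 < p) (hp1 : p < 1) :
    binExp (n-1) p (fun k => (((k : ℝ) + 3) ^ 3 - 7 * ((k : ℝ) + 3) + 8 * ((n : ℝ) + 2))) =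
      p^3 * (n : ℝ)^3 + (12*p^2 - 6*p^3) * (n : ℝ)^2
        + (11*p^3 - 36*p^2 + 30*p + 8) * (n : ℝ) - 6*p^3 + 24*p^2 - 30*p + 22 := by
  obtain ⟨j, rfl⟩ : ∃ j, n = j + 1 := ⟨n - 1, by omega⟩
  have hm : j + 1 - 1 = j := by omega
  rw [hm]
  have e : (fun (k:ℕ) => (((k : ℝ) + 3) ^ 3 - 7 * ((k : ℝ) + 3) + 8 * (((j+1 : ℕ) : ℝ) + 2)))
      = (fun (k:ℕ) => 1*(k:ℝ)^3 + 9*(k:ℝ)^2 + 20*(k:ℝ) + (8*((j:ℝ)+1) + 22)) := by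
    funext k; push_cast; ring
  rw [e, bE_poly, bE_m1, bE_m2, bE_m3]
  push_cast; ring
end

section
/- Let F_n = L_n^3 - 7L_n + 8(n+2) with L_n = 3 + Binomial(n-1,p), 0 < p < 1. Then for every r > 0, F_n / n^3 converges to p^3 in L^r as n → ∞. -/
open Filter MeasureTheory Asymptotics Topology

/-! Write `K ~ Binomial(n - 1, p)`, so `L_n = K + 3`. Since `F_n / n³ = (K / n)³ + O(1 / n)` and
`|a³ - b³| ≤ 3 |a - b|` on `[0, 1]`, the integrand is at most `((3 |K - (n - 1) p| + 62) / n) ^ r`,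
which is uniformly bounded by `65 ^ r`. Splitting at `|K - (n - 1) p| = t` and using Chebyshev's
inequality (`Var K ≤ n`) bounds the `r`-th moment by `((3 t + 62) / n) ^ r + 65 ^ r n / t²`,
which tends to `0` for `t = n ^ (3/4)`. -/

namespace binExp

variable {m : ℕ} {p : ℝ}

lemma weight_nonneg (hp0 : 0 ≤ p) (hp1 : p ≤ 1) (k : ℕ) :
    0 ≤ (m.choose k : ℝ) * p ^ k * (1 - p) ^ (m - k) := by
  have : 0 ≤ 1 - p := sub_nonneg.mpr hp1
  positivity

lemma mono (hp0 : 0 ≤ p) (hp1 : p ≤ 1) {f g : ℕ → ℝ} (hfg : ∀ k ≤ m, f k ≤ g k) :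
    binExp m p f ≤ binExp m p g :=
  Finset.sum_le_sum fun k hk => mul_le_mul_of_nonneg_left
    (hfg k (Nat.lt_succ_iff.mp (Finset.mem_range.mp hk))) (weight_nonneg hp0 hp1 k)

lemma nonneg (hp0 : 0 ≤ p) (hp1 : p ≤ 1) {f : ℕ → ℝ} (hf : ∀ k, 0 ≤ f k) :
    0 ≤ binExp m p f :=
  Finset.sum_nonneg fun k _ => mul_nonneg (weight_nonneg hp0 hp1 k) (hf k)

lemma one (m : ℕ) (p : ℝ) : binExp m p (fun _ => 1) = 1 := by
  have h := add_pow p (1 - p) m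
  rw [add_sub_cancel, one_pow] at h
  simp only [binExp, mul_one]
  exact (Finset.sum_congr rfl fun k _ => by ring).trans h.symm

lemma const_add_mul (c d : ℝ) (f : ℕ → ℝ) :
    binExp m p (fun k => c + d * f k) = c + d * binExp m p f := by
  have h := one m p
  simp only [binExp, mul_one] at h
  simp only [binExp, mul_add, Finset.sum_add_distrib, Finset.mul_sum]
  rw [← Finset.sum_mul, h, one_mul]
  exact congrArg _ (Finset.sum_congr rfl fun k _ => by ring)

lemma sq_sub_mul (m : ℕ) (p : ℝ) :
    binExp m p (fun k => ((k : ℝ) - m * p) ^ 2) = m * p * (1 - p) := by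
  have h := congrArg (Polynomial.eval p) (bernsteinPolynomial.variance ℝ m)
  simp only [Polynomial.eval_finsetSum, Polynomial.eval_mul, Polynomial.eval_pow,
    Polynomial.eval_sub, Polynomial.eval_X, Polynomial.eval_natCast,
    Polynomial.eval_one, bernsteinPolynomial, nsmul_eq_mul] at h
  rw [← h]
  exact Finset.sum_congr rfl fun k _ => by ring

lemma le_add_of_concentration (hp0 : 0 ≤ p) (hp1 : p ≤ 1) {h : ℕ → ℝ} {B ε t : ℝ}
    (hB : 0 ≤ B) (hε : 0 ≤ ε) (ht : 0 < t) (hbound : ∀ k ≤ m, h k ≤ B)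
    (hnear : ∀ k ≤ m, |(k : ℝ) - m * p| ≤ t → h k ≤ ε) :
    binExp m p h ≤ ε + B * (m * p * (1 - p)) / t ^ 2 := by
  have hpt : ∀ k ≤ m, h k ≤ ε + B / t ^ 2 * ((k : ℝ) - m * p) ^ 2 := by
    intro k hk
    rcases le_or_gt |(k : ℝ) - m * p| t with hkt | hkt
    · have : 0 ≤ B / t ^ 2 * ((k : ℝ) - m * p) ^ 2 := by positivity
      linarith [hnear k hk hkt]
    · have hsq : t ^ 2 ≤ ((k : ℝ) - m * p) ^ 2 := by
        simpa only [sq_abs] using pow_le_pow_left₀ ht.le hkt.le 2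
      calc h k ≤ B / t ^ 2 * t ^ 2 := by rw [div_mul_cancel₀ B (by positivity)]; exact hbound k hk
        _ ≤ ε + B / t ^ 2 * ((k : ℝ) - m * p) ^ 2 := by
          nlinarith [div_nonneg hB (sq_nonneg t)]
  calc binExp m p h ≤ binExp m p (fun k => ε + B / t ^ 2 * ((k : ℝ) - m * p) ^ 2) := mono hp0 hp1 hpt
    _ = ε + B * (m * p * (1 - p)) / t ^ 2 := by rw [const_add_mul, sq_sub_mul]; ring

end binExp

noncomputable def forgottenIndex (N K : ℝ) : ℝ := (K + 3) ^ 3 - 7 * (K + 3) + 8 * (N + 2)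

lemma abs_forgottenIndex_div_sub_le {p N K : ℝ} (hp0 : 0 ≤ p) (hp1 : p ≤ 1) (hN : 1 ≤ N)
    (hK0 : 0 ≤ K) (hKN : K ≤ N) :
    |forgottenIndex N K / N ^ 3 - p ^ 3| ≤ (3 * |K - (N - 1) * p| + 62) / N := by
  have hN0 : 0 < N := by linarith
  have hdecomp : forgottenIndex N K / N ^ 3 - p ^ 3
      = ((K / N) ^ 3 - p ^ 3) + (9 * K ^ 2 + 20 * K + 8 * N + 22) / N ^ 3 := by
    unfold forgottenIndex; field_simp; ring
  have hmean : |K / N - p| ≤ (|K - (N - 1) * p| + 1) / N := by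
    rw [show K / N - p = (K - (N - 1) * p - p) / N by field_simp; ring, abs_div, abs_of_pos hN0]
    gcongr
    calc |K - (N - 1) * p - p| ≤ |K - (N - 1) * p| + |p| := abs_sub _ _
      _ ≤ |K - (N - 1) * p| + 1 := by rw [abs_of_nonneg hp0]; linarith
  have hcube : |(K / N) ^ 3 - p ^ 3| ≤ 3 * |K / N - p| := by
    have hKN1 : |K / N| ≤ 1 := by
      rw [abs_of_nonneg (by positivity), div_le_one hN0]; exact hKN
    have hmax : max |K / N| |p| ^ 2 ≤ 1 :=
      pow_le_one₀ (by positivity) (max_le hKN1 (by rwa [abs_of_nonneg hp0]))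
    calc |(K / N) ^ 3 - p ^ 3| ≤ |K / N - p| * (3 : ℕ) * max |K / N| |p| ^ (3 - 1) :=
          abs_pow_sub_pow_le _ _ _
      _ ≤ 3 * |K / N - p| := by push_cast; nlinarith [abs_nonneg (K / N - p)]
  have hrest : |(9 * K ^ 2 + 20 * K + 8 * N + 22) / N ^ 3| ≤ 59 / N := by
    rw [abs_of_nonneg (by positivity), div_le_div_iff₀ (by positivity) hN0]
    nlinarith [mul_le_mul hKN hKN hK0 hN0.le]
  calc |forgottenIndex N K / N ^ 3 - p ^ 3|
      ≤ |(K / N) ^ 3 - p ^ 3| + |(9 * K ^ 2 + 20 * K + 8 * N + 22) / N ^ 3| :=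
        hdecomp ▸ abs_add_le _ _
    _ ≤ 3 * ((|K - (N - 1) * p| + 1) / N) + 59 / N := by linarith
    _ = (3 * |K - (N - 1) * p| + 62) / N := by ring

lemma forgottenIndex_moment_le {p r : ℝ} (hp0 : 0 ≤ p) (hp1 : p ≤ 1) (hr : 0 ≤ r) {n : ℕ}
    (hn : 1 ≤ n) {t : ℝ} (ht : 0 < t) :
    binExp (n - 1) p (fun k => |forgottenIndex n k / (n : ℝ) ^ 3 - p ^ 3| ^ r)
      ≤ ((3 * t + 62) / n) ^ r + 65 ^ r * n / t ^ 2 := by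
  have hN : (1 : ℝ) ≤ n := by exact_mod_cast hn
  have hcast : ((n - 1 : ℕ) : ℝ) = n - 1 := by push_cast [hn]; ring
  have hkn : ∀ k ≤ n - 1, (k : ℝ) ≤ n := fun k hk => by
    have : (k : ℝ) ≤ ((n - 1 : ℕ) : ℝ) := by exact_mod_cast hk
    linarith
  have hbound : ∀ k ≤ n - 1, |forgottenIndex n k / (n : ℝ) ^ 3 - p ^ 3| ^ r ≤ 65 ^ r := by
    intro k hk
    have hdev : |(k : ℝ) - (n - 1) * p| ≤ n := by
      rw [abs_le]; constructor <;> nlinarith [hkn k hk, (k.cast_nonneg : (0 : ℝ) ≤ k)]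
    gcongr
    calc _ ≤ (3 * |(k : ℝ) - (n - 1) * p| + 62) / n :=
          abs_forgottenIndex_div_sub_le hp0 hp1 hN k.cast_nonneg (hkn k hk)
      _ ≤ 65 := by rw [div_le_iff₀ (by linarith)]; linarith
  have hnear : ∀ k ≤ n - 1, |(k : ℝ) - ((n - 1 : ℕ) : ℝ) * p| ≤ t →
      |forgottenIndex n k / (n : ℝ) ^ 3 - p ^ 3| ^ r ≤ ((3 * t + 62) / n) ^ r := by
    intro k hk hkt
    rw [hcast] at hkt
    gcongr
    calc _ ≤ (3 * |(k : ℝ) - (n - 1) * p| + 62) / n :=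
          abs_forgottenIndex_div_sub_le hp0 hp1 hN k.cast_nonneg (hkn k hk)
      _ ≤ (3 * t + 62) / n := by gcongr
  have hvar : ((n - 1 : ℕ) : ℝ) * p * (1 - p) ≤ n := by
    have hpq : p * (1 - p) ≤ 1 := by nlinarith
    rw [hcast]; nlinarith [mul_nonneg (sub_nonneg.mpr hN) (sub_nonneg.mpr hpq)]
  calc _ ≤ ((3 * t + 62) / n) ^ r + 65 ^ r * (((n - 1 : ℕ) : ℝ) * p * (1 - p)) / t ^ 2 :=
        binExp.le_add_of_concentration hp0 hp1 (by positivity) (by positivity) ht hbound hnear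
    _ ≤ ((3 * t + 62) / n) ^ r + 65 ^ r * n / t ^ 2 := by gcongr

lemma tendsto_forgottenIndex_moment_bound {r : ℝ} (hr : 0 < r) :
    Tendsto (fun x : ℝ => ((3 * x ^ (3 / 4 : ℝ) + 62) / x) ^ r + 65 ^ r * x / (x ^ (3 / 4 : ℝ)) ^ 2)
      atTop (𝓝 0) := by
  have hmean : Tendsto (fun x : ℝ => 3 * x ^ (-(1 / 4) : ℝ) + 62 * x ^ (-1 : ℝ)) atTop (𝓝 0) := by
    simpa using ((tendsto_rpow_neg_atTop (by norm_num : (0 : ℝ) < 1 / 4)).const_mul 3).add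
      ((tendsto_rpow_neg_atTop zero_lt_one).const_mul 62)
  have hlim := (hmean.rpow_const (Or.inr hr.le)).add
    ((tendsto_rpow_neg_atTop (by norm_num : (0 : ℝ) < 1 / 2)).const_mul (65 ^ r))
  rw [Real.zero_rpow hr.ne', mul_zero, add_zero] at hlim
  refine hlim.congr' ?_
  filter_upwards [eventually_gt_atTop 0] with x hx
  have h1 : x ^ (-(1 / 4) : ℝ) = x ^ (3 / 4 : ℝ) / x := by
    rw [← Real.rpow_sub_one hx.ne']; norm_num
  have h2 : x ^ (-(1 / 2) : ℝ) = x / (x ^ (3 / 4 : ℝ)) ^ 2 := by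
    rw [← Real.rpow_natCast, ← Real.rpow_mul hx.le, ← Real.rpow_one_sub' hx.le] <;> norm_num
  rw [h1, h2, Real.rpow_neg_one]
  congr 1
  · congr 1; field_simp
  · ring

/-- F_n / n³ → p³ in L^r for every r > 0. -/
theorem stmt16 (p : ℝ) (hp0 : 0 < p) (hp1 : p < 1) (r : ℝ) (hr : 0 < r) :
    Filter.Tendsto (fun n : ℕ =>
      binExp (n-1) p (fun k => |(((k : ℝ) + 3) ^ 3 - 7 * ((k : ℝ) + 3) + 8 * ((n : ℝ) + 2)) / (n : ℝ)^3 - p^3| ^ r))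
      Filter.atTop (𝓝 0) := by
  refine tendsto_of_tendsto_of_tendsto_of_le_of_le' tendsto_const_nhds
    ((tendsto_forgottenIndex_moment_bound hr).comp tendsto_natCast_atTop_atTop)
    (Eventually.of_forall fun n => binExp.nonneg hp0.le hp1.le fun k => by positivity) ?_
  filter_upwards [eventually_ge_atTop 1] with n hn
  exact forgottenIndex_moment_le hp0.le hp1.le hr.le hn
    (Real.rpow_pos_of_pos (by exact_mod_cast hn) _)
end
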